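/- Fix ρ ∈ [0,1]^K with Σ_k ρ_k = 1, a sequence αₙ ∈ (0,1) with lim_n αₙ = 0 and lim_n n·αₙ = ∞, and a constant ξ₂ > 0. Suppose for each n, Pₙ is a probability distribution on Zⁿ with D(Pₙ‖Q_{αₙ}^{⊗n}) ≤ exp(−ξ₂·n·αₙ). Then there exists a constant ξ₃ > 0 such that for all n large enough, |D(Pₙ‖Q_∅^{⊗n}) − D(Q_{αₙ}^{⊗n}‖Q_∅^{⊗n})| ≤ exp(−ξ₃·n·αₙ). -/

import Mathlib

open Finset Filter
open scoped Topology

noncomputable section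

/-- `P` is a probability distribution on the finite type `Z`. -/
def IsDist {Z : Type*} [Fintype Z] (P : Z → ℝ) : Prop :=
  (∀ z, 0 ≤ P z) ∧ ∑ z, P z = 1

/-- Kullback–Leibler divergence `D(P‖Q)` (natural logarithm). -/
def klDiv {Z : Type*} [Fintype Z] (P Q : Z → ℝ) : ℝ :=
  ∑ z, P z * Real.log (P z / Q z)

/-- `P` is absolutely continuous w.r.t. `Q`. -/
def AbsCont {Z : Type*} (P Q : Z → ℝ) : Prop :=
  ∀ z, Q z = 0 → P z = 0

/-- The output mixture `Q_α(z) = Σ_{T⊆[K]} (∏_{k∈T} ρ_k α)(∏_{k∉T}(1-ρ_k α)) Q_T(z)`. -/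
def Qmix {K : ℕ} {Z : Type*} [Fintype Z] (Q : Finset (Fin K) → Z → ℝ) (ρ : Fin K → ℝ)
    (α : ℝ) (z : Z) : ℝ :=
  ∑ T : Finset (Fin K), (∏ k ∈ T, ρ k * α) * (∏ k ∈ Tᶜ, (1 - ρ k * α)) * Q T z

/-! Write `L = log (Q_α^{⊗n} / Q_∅^{⊗n})`. The chain rule gives
`D(Pₙ‖Q_∅^{⊗n}) - D(Q_α^{⊗n}‖Q_∅^{⊗n}) = D(Pₙ‖Q_α^{⊗n}) + (E_{Pₙ} L - E_{Q_α^{⊗n}} L)`.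
Letterwise `Q_α` is within `α` of `Q_∅`, so `|L| ≤ M = O(nα)`, and the Donsker–Varadhan
formula applied to `s L` bounds the difference of means by `D(Pₙ‖Q_α^{⊗n}) / s + s M²`.
Choosing `s = exp(-ξ₂ n α / 2)` makes every term exponentially small in `n α`. -/

open Real

lemma IsDist.nonempty {W : Type*} [Fintype W] {P : W → ℝ} (hP : IsDist P) : Nonempty W := by
  obtain ⟨z, -, -⟩ := exists_ne_zero_of_sum_ne_zero (hP.2 ▸ one_ne_zero : ∑ z, P z ≠ 0)
  exact ⟨z⟩

lemma IsDist.le_one {W : Type*} [Fintype W] {P : W → ℝ} (hP : IsDist P) (z : W) : P z ≤ 1 :=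
  hP.2 ▸ single_le_sum (fun z _ => hP.1 z) (mem_univ z)

lemma IsDist.pi {Z ι : Type*} [Fintype Z] [Fintype ι] [DecidableEq ι] {q : Z → ℝ}
    (hq : IsDist q) : IsDist (fun z : ι → Z => ∏ j, q (z j)) := by
  refine ⟨fun z => prod_nonneg fun j _ => hq.1 (z j), ?_⟩
  rw [← Fintype.prod_sum fun _ : ι => q, hq.2, prod_const_one]

lemma sub_le_mul_log_div {p q : ℝ} (hp : 0 ≤ p) (hq : 0 < q) : p - q ≤ p * log (p / q) := by
  rcases hp.eq_or_lt with rfl | hp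
  · simpa using hq.le
  have h := one_sub_inv_le_log_of_pos (div_pos hp hq)
  rw [inv_div] at h
  calc p - q = p * (1 - q / p) := by field_simp
    _ ≤ p * log (p / q) := mul_le_mul_of_nonneg_left h hp.le

lemma abs_log_le_two_mul_of_abs_sub_one_le {x a : ℝ} (hx : |x - 1| ≤ a) (ha : a ≤ 1 / 2) :
    |log x| ≤ 2 * a := by
  obtain ⟨hlow, hup⟩ := abs_le.1 hx
  have hx0 : 0 < x := by linarith
  have hinv : x⁻¹ ≤ 1 + 2 * a := by
    rw [inv_le_iff_one_le_mul₀ hx0]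
    nlinarith
  rw [abs_le]
  constructor
  · linarith [one_sub_inv_le_log_of_pos hx0]
  · linarith [log_le_sub_one_of_pos hx0]

lemma abs_log_prod_div_prod_le {Z ι : Type*} [Fintype ι] {q r : Z → ℝ} (hq : ∀ z, q z ≠ 0)
    (hr : ∀ z, r z ≠ 0) {c : ℝ} (hc : ∀ z, |log (q z / r z)| ≤ c) (z : ι → Z) :
    |log ((∏ j, q (z j)) / ∏ j, r (z j))| ≤ Fintype.card ι * c := by
  rw [← prod_div_distrib, log_prod fun j _ => div_ne_zero (hq _) (hr _)]
  calc |∑ j, log (q (z j) / r (z j))| ≤ ∑ j, |log (q (z j) / r (z j))| :=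
        abs_sum_le_sum_abs _ _
    _ ≤ Fintype.card ι * c := by simpa using sum_le_card_nsmul univ _ c fun j _ => hc (z j)

lemma eventually_two_add_sq_mul_exp_neg_le_one (a : ℝ) {c : ℝ} (hc : 0 < c) :
    ∀ᶠ x in atTop, (2 + (a * x) ^ 2) * exp (-(c * x)) ≤ 1 := by
  have h := ((tendsto_rpow_mul_exp_neg_mul_atTop_nhds_zero 0 c hc).const_mul 2).add
    ((tendsto_rpow_mul_exp_neg_mul_atTop_nhds_zero 2 c hc).const_mul (a ^ 2))
  simp only [rpow_zero, rpow_two, mul_zero, add_zero] at h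
  refine (h.congr fun x => ?_).eventually_le_const zero_lt_one
  ring_nf

section Divergence

variable {W : Type*} [Fintype W]

lemma klDiv_eq_klDiv_add_sum_mul_log {P Q R : W → ℝ} (hQ : ∀ z, 0 < Q z)
    (hR : ∀ z, 0 < R z) :
    klDiv P R = klDiv P Q + ∑ z, P z * log (Q z / R z) := by
  rw [klDiv, klDiv, ← sum_add_distrib]
  refine sum_congr rfl fun z _ => ?_
  rcases eq_or_ne (P z) 0 with h | h
  · simp [h]
  · rw [← mul_add, ← log_mul (div_ne_zero h (hQ z).ne') (div_ne_zero (hQ z).ne' (hR z).ne'),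
      div_mul_div_cancel₀ (hQ z).ne']

lemma klDiv_nonneg {P Q : W → ℝ} (hP : IsDist P) (hQ : ∀ z, 0 < Q z)
    (hQ1 : ∑ z, Q z ≤ 1) :
    0 ≤ klDiv P Q := by
  have h := sum_le_sum fun z (_ : z ∈ univ) => sub_le_mul_log_div (hP.1 z) (hQ z)
  rw [sum_sub_distrib, hP.2] at h
  exact (sub_nonneg.2 hQ1).trans h

/-- Donsker–Varadhan: compare `P` with the tilted distribution `Q e^f / ∑ Q e^f`. -/
lemma sum_mul_le_klDiv_add_log_sum_mul_exp {P Q : W → ℝ} (hP : IsDist P) (hQ : ∀ z, 0 < Q z)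
    (f : W → ℝ) : ∑ z, P z * f z ≤ klDiv P Q + log (∑ z, Q z * exp (f z)) := by
  have := hP.nonempty
  set C := ∑ z, Q z * exp (f z)
  have hC : 0 < C := sum_pos (fun z _ => by have := hQ z; positivity) univ_nonempty
  set Q' : W → ℝ := fun z => Q z * exp (f z) / C
  have hQ' : ∀ z, 0 < Q' z := fun z => by have := hQ z; positivity
  have hQ'1 : ∑ z, Q' z = 1 := by rw [← sum_div, div_self hC.ne']
  have hlog : ∀ z, log (Q' z / Q z) = f z - log C := fun z => by
    rw [show Q' z / Q z = exp (f z) / C by simp only [Q']; field_simp [(hQ z).ne'],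
      log_div (exp_pos _).ne' hC.ne', log_exp]
  have hchain := klDiv_eq_klDiv_add_sum_mul_log (P := P) hQ' hQ
  simp only [hlog, mul_sub, sum_sub_distrib, ← sum_mul, hP.2, one_mul] at hchain
  linarith [klDiv_nonneg hP hQ' hQ'1.le]

lemma log_sum_mul_exp_le {Q : W → ℝ} (hQ : IsDist Q) {g : W → ℝ} {c : ℝ}
    (hg : ∀ z, |g z| ≤ c) (hc : c ≤ 1) :
    log (∑ z, Q z * exp (g z)) ≤ ∑ z, Q z * g z + c ^ 2 := by
  have hexp : ∀ z, exp (g z) ≤ 1 + g z + c ^ 2 := fun z => by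
    have h := (abs_le.1 (abs_exp_sub_one_sub_id_le ((hg z).trans hc))).2
    have := sq_le_sq' (abs_le.1 (hg z)).1 (abs_le.1 (hg z)).2
    linarith
  have hsum : ∑ z, Q z * exp (g z) ≤ 1 + ∑ z, Q z * g z + c ^ 2 := calc
    _ ≤ ∑ z, Q z * (1 + g z + c ^ 2) :=
      sum_le_sum fun z _ => mul_le_mul_of_nonneg_left (hexp z) (hQ.1 z)
    _ = 1 + ∑ z, Q z * g z + c ^ 2 := by
      simp only [mul_add, mul_one, sum_add_distrib, ← sum_mul, hQ.2, one_mul]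
  have := hQ.nonempty
  have hpos : 0 < ∑ z, Q z * exp (g z) := by
    refine lt_of_lt_of_le ?_ (sum_le_sum fun z _ => mul_le_mul_of_nonneg_left
      (exp_le_exp.2 (neg_le_of_abs_le ((hg z).trans hc))) (hQ.1 z))
    rw [← sum_mul, hQ.2, one_mul]
    exact exp_pos _
  linarith [log_le_sub_one_of_pos hpos]

lemma sum_mul_sub_sum_mul_le {P Q : W → ℝ} (hP : IsDist P) (hQ : IsDist Q)
    (hQpos : ∀ z, 0 < Q z) {f : W → ℝ} {M s : ℝ} (hf : ∀ z, |f z| ≤ M) (hs : 0 < s)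
    (hsM : s * M ≤ 1) :
    ∑ z, P z * f z - ∑ z, Q z * f z ≤ klDiv P Q / s + s * M ^ 2 := by
  have hdv := sum_mul_le_klDiv_add_log_sum_mul_exp hP hQpos (fun z => s * f z)
  have hmgf := log_sum_mul_exp_le hQ (g := fun z => s * f z) (fun z => by
    rw [abs_mul, abs_of_pos hs]; exact mul_le_mul_of_nonneg_left (hf z) hs.le) hsM
  simp only [mul_left_comm _ s, ← mul_sum] at hdv hmgf
  rw [div_add' _ _ _ hs.ne', le_div_iff₀ hs]
  nlinarith

lemma abs_sum_mul_sub_sum_mul_le {P Q : W → ℝ} (hP : IsDist P) (hQ : IsDist Q)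
    (hQpos : ∀ z, 0 < Q z) {f : W → ℝ} {M s : ℝ} (hf : ∀ z, |f z| ≤ M) (hs : 0 < s)
    (hsM : s * M ≤ 1) :
    |∑ z, P z * f z - ∑ z, Q z * f z| ≤ klDiv P Q / s + s * M ^ 2 := by
  have hneg := sum_mul_sub_sum_mul_le hP hQ hQpos (f := fun z => -f z)
    (fun z => (abs_neg (f z)).trans_le (hf z)) hs hsM
  simp only [mul_neg, sum_neg_distrib] at hneg
  exact abs_le.2 ⟨by linarith, sum_mul_sub_sum_mul_le hP hQ hQpos hf hs hsM⟩

lemma abs_klDiv_sub_klDiv_le {P Q R : W → ℝ} (hP : IsDist P) (hQ : IsDist Q)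
    (hQpos : ∀ z, 0 < Q z) (hR : ∀ z, 0 < R z) {M s : ℝ} (hL : ∀ z, |log (Q z / R z)| ≤ M)
    (hs : 0 < s) (hsM : s * M ≤ 1) :
    |klDiv P R - klDiv Q R| ≤ klDiv P Q + klDiv P Q / s + s * M ^ 2 := by
  have hmean := abs_sum_mul_sub_sum_mul_le hP hQ hQpos hL hs hsM
  rw [klDiv_eq_klDiv_add_sum_mul_log hQpos hR, add_sub_assoc]
  refine (abs_add_le _ _).trans ?_
  rw [abs_of_nonneg (klDiv_nonneg hP hQpos hQ.2.le), add_assoc]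
  exact add_le_add le_rfl hmean

lemma abs_klDiv_sub_klDiv_le_exp {P Q R : W → ℝ} (hP : IsDist P) (hQ : IsDist Q)
    (hQpos : ∀ z, 0 < Q z) (hR : ∀ z, 0 < R z) {M u : ℝ} (hL : ∀ z, |log (Q z / R z)| ≤ M)
    (hD : klDiv P Q ≤ exp (-(4 * u))) (hu : (2 + M ^ 2) * exp (-u) ≤ 1) :
    |klDiv P R - klDiv Q R| ≤ exp (-u) := by
  set e := exp (-u)
  have he : 0 < e := exp_pos _
  have he4 : exp (-(4 * u)) = e ^ 4 := by rw [← exp_nat_mul]; ring_nf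
  rw [he4] at hD
  have he1 : e ≤ 1 / 2 := by nlinarith [sq_nonneg M]
  have hsM : e ^ 2 * M ≤ 1 := by nlinarith [sq_nonneg (M - 1), sq_nonneg M]
  have hDs : klDiv P Q / e ^ 2 ≤ e ^ 2 := by
    rw [div_le_iff₀ (by positivity)]
    nlinarith
  calc |klDiv P R - klDiv Q R| ≤ klDiv P Q + klDiv P Q / e ^ 2 + e ^ 2 * M ^ 2 :=
        abs_klDiv_sub_klDiv_le hP hQ hQpos hR hL (by positivity) hsM
    _ ≤ (2 + M ^ 2) * e * e := by
      nlinarith [pow_le_pow_of_le_one he.le (by linarith) (by norm_num : 2 ≤ 4)]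
    _ ≤ e := by nlinarith

end Divergence

section BernoulliSet

variable {ι : Type*} [Fintype ι] [DecidableEq ι]

def bernoulliSetProb (p : ι → ℝ) (T : Finset ι) : ℝ :=
  (∏ k ∈ T, p k) * ∏ k ∈ Tᶜ, (1 - p k)

lemma sum_bernoulliSetProb (p : ι → ℝ) : ∑ T, bernoulliSetProb p T = 1 := by
  simp [bernoulliSetProb, ← Fintype.prod_add]

lemma bernoulliSetProb_nonneg {p : ι → ℝ} (hp : ∀ k, p k ∈ Set.Icc 0 1) (T : Finset ι) :
    0 ≤ bernoulliSetProb p T :=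
  mul_nonneg (prod_nonneg fun k _ => (hp k).1) (prod_nonneg fun k _ => sub_nonneg.2 (hp k).2)

lemma one_sub_sum_le_bernoulliSetProb_empty [LinearOrder ι] {p : ι → ℝ}
    (hp : ∀ k, p k ∈ Set.Icc 0 1) : 1 - ∑ k, p k ≤ bernoulliSetProb p ∅ := by
  rw [bernoulliSetProb, prod_empty, one_mul, compl_empty, prod_one_sub_ordered, sub_le_sub_iff_left]
  exact sum_le_sum fun k _ => mul_le_of_le_one_right (hp k).1
    (prod_le_one (fun j _ => sub_nonneg.2 (hp j).2) fun j _ => sub_le_self _ (hp j).1)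

end BernoulliSet

section Qmix

variable {K : ℕ} {Z : Type*} [Fintype Z] {Q : Finset (Fin K) → Z → ℝ} {ρ : Fin K → ℝ}
  {α : ℝ}

lemma Qmix_eq_sum_bernoulliSetProb (z : Z) :
    Qmix Q ρ α z = ∑ T, bernoulliSetProb (fun k => ρ k * α) T * Q T z :=
  rfl

lemma sum_Qmix (hQ : ∀ U, ∑ z, Q U z = 1) : ∑ z, Qmix Q ρ α z = 1 := by
  simp only [Qmix_eq_sum_bernoulliSetProb]
  rw [sum_comm]
  simp only [← mul_sum, hQ, mul_one, sum_bernoulliSetProb]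

lemma abs_Qmix_sub_le (hQ : ∀ U, IsDist (Q U)) (hρ : ∀ k, ρ k ∈ Set.Icc (0 : ℝ) 1)
    (hρ1 : ∑ k, ρ k = 1) (hα : α ∈ Set.Icc (0 : ℝ) 1) (z : Z) :
    |Qmix Q ρ α z - Q ∅ z| ≤ α := by
  set w := bernoulliSetProb fun k => ρ k * α
  have hp : ∀ k, ρ k * α ∈ Set.Icc (0 : ℝ) 1 := fun k =>
    ⟨mul_nonneg (hρ k).1 hα.1, mul_le_one₀ (hρ k).2 hα.1 hα.2⟩
  have hw : ∀ T, 0 ≤ w T := bernoulliSetProb_nonneg hp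
  have hdiff : Qmix Q ρ α z - Q ∅ z = ∑ T, w T * (Q T z - Q ∅ z) := by
    simp only [Qmix_eq_sum_bernoulliSetProb, mul_sub, sum_sub_distrib, ← sum_mul, w,
      sum_bernoulliSetProb, one_mul]
  have hQle : ∀ T, |Q T z - Q ∅ z| ≤ 1 := fun T =>
    abs_sub_le_of_nonneg_of_le ((hQ T).1 z) ((hQ T).le_one z) ((hQ ∅).1 z) ((hQ ∅).le_one z)
  have hempty := one_sub_sum_le_bernoulliSetProb_empty hp
  rw [← sum_mul, hρ1, one_mul] at hempty
  calc |Qmix Q ρ α z - Q ∅ z| ≤ ∑ T, w T * |Q T z - Q ∅ z| := by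
        rw [hdiff]
        exact (abs_sum_le_sum_abs _ _).trans_eq (sum_congr rfl fun T _ => by
          rw [abs_mul, abs_of_nonneg (hw T)])
    _ = ∑ T ∈ univ.erase ∅, w T * |Q T z - Q ∅ z| := (sum_erase _ (by simp)).symm
    _ ≤ ∑ T ∈ univ.erase ∅, w T :=
      sum_le_sum fun T _ => mul_le_of_le_one_right (hw T) (hQle T)
    _ = 1 - w ∅ := by
      rw [← sum_bernoulliSetProb (fun k => ρ k * α), ← add_sum_erase _ _ (mem_univ ∅)]
      ring
    _ ≤ α := by linarith

lemma abs_Qmix_div_sub_one_le (hQ : ∀ U, IsDist (Q U)) (hρ : ∀ k, ρ k ∈ Set.Icc (0 : ℝ) 1)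
    (hρ1 : ∑ k, ρ k = 1) (hα : α ∈ Set.Icc (0 : ℝ) 1) {z : Z} (hz : 0 < Q ∅ z) {B : ℝ}
    (hB : (Q ∅ z)⁻¹ ≤ B) : |Qmix Q ρ α z / Q ∅ z - 1| ≤ B * α := by
  rw [div_sub_one hz.ne', abs_div, abs_of_pos hz, div_eq_mul_inv, mul_comm B]
  exact mul_le_mul (abs_Qmix_sub_le hQ hρ hρ1 hα z) hB (inv_nonneg.2 hz.le) hα.1

end Qmix

theorem klDiv_identification_general (K : ℕ) {Z : Type*} [Fintype Z]
    (Q : Finset (Fin K) → Z → ℝ) (hQ : ∀ U, IsDist (Q U))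
    (hQpos : ∀ z, 0 < Q ∅ z)
    (ρ : Fin K → ℝ) (hρ : ∀ k, ρ k ∈ Set.Icc (0 : ℝ) 1) (hρ1 : ∑ k, ρ k = 1)
    (α : ℕ → ℝ) (hα : ∀ n, α n ∈ Set.Ioo (0 : ℝ) 1)
    (hα0 : Tendsto α atTop (𝓝 0))
    (hnα : Tendsto (fun n : ℕ => (n : ℝ) * α n) atTop atTop)
    (ξ₂ : ℝ) (hξ₂ : 0 < ξ₂)
    (P : ∀ n : ℕ, (Fin n → Z) → ℝ) (hP : ∀ n, IsDist (P n))
    (hPD : ∀ n : ℕ, klDiv (P n) (fun z : Fin n → Z => ∏ j, Qmix Q ρ (α n) (z j)) ≤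
      Real.exp (-(ξ₂ * n * α n))) :
    ∃ ξ₃ > 0, ∃ N : ℕ, ∀ n ≥ N,
      |klDiv (P n) (fun z : Fin n → Z => ∏ j, Q ∅ (z j)) -
          klDiv (fun z : Fin n → Z => ∏ j, Qmix Q ρ (α n) (z j))
            (fun z : Fin n → Z => ∏ j, Q ∅ (z j))| ≤
        Real.exp (-(ξ₃ * n * α n)) := by
  obtain ⟨B, hB⟩ : ∃ B, ∀ z, (Q ∅ z)⁻¹ ≤ B :=
    ⟨∑ z, (Q ∅ z)⁻¹, fun z =>
      single_le_sum (fun z _ => (inv_pos.2 (hQpos z)).le) (mem_univ z)⟩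
  have hsmall : ∀ᶠ n in atTop, B * α n ≤ 1 / 2 := by
    have h := hα0.const_mul B
    rw [mul_zero] at h
    exact h.eventually_le_const one_half_pos
  have hlarge := hnα.eventually
    (eventually_two_add_sq_mul_exp_neg_le_one (2 * B) (div_pos hξ₂ four_pos))
  obtain ⟨N, hN⟩ := eventually_atTop.1 (hsmall.and hlarge)
  refine ⟨ξ₂ / 4, by positivity, N, fun n hn => ?_⟩
  obtain ⟨hαB, hexp⟩ := hN n hn
  have hratio z :=
    abs_Qmix_div_sub_one_le hQ hρ hρ1 (Set.Ioo_subset_Icc_self (hα n)) (hQpos z) (hB z)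
  have hqpos : ∀ z, 0 < Qmix Q ρ (α n) z := fun z =>
    (div_pos_iff_of_pos_right (hQpos z)).1 (by linarith [(abs_le.1 (hratio z)).1])
  have hq : IsDist (Qmix Q ρ (α n)) := ⟨fun z => (hqpos z).le, sum_Qmix fun U => (hQ U).2⟩
  have hL : ∀ z : Fin n → Z,
      |log ((∏ j, Qmix Q ρ (α n) (z j)) / ∏ j, Q ∅ (z j))| ≤ 2 * B * (n * α n) := fun z =>
    (abs_log_prod_div_prod_le (fun z => (hqpos z).ne') (fun z => (hQpos z).ne')
      (fun z => abs_log_le_two_mul_of_abs_sub_one_le (hratio z) hαB) z).trans_eq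
      (by rw [Fintype.card_fin]; ring)
  refine abs_klDiv_sub_klDiv_le_exp (hP n) hq.pi
    (fun z => prod_pos fun j _ => hqpos (z j)) (fun z => prod_pos fun j _ => hQpos (z j)) hL
    ((hPD n).trans_eq (by ring_nf)) ?_
  simpa only [mul_assoc] using hexp

/-- if a sequence of distributions `Pₙ` on `Zⁿ` satisfies
`D(Pₙ‖Q_{αₙ}^{⊗n}) ≤ exp(−ξ₂ n αₙ)`, then the divergences of `Pₙ` and of `Q_{αₙ}^{⊗n}`
from `Q_∅^{⊗n}` are exponentially close. -/
theorem klDiv_identification (K : ℕ) (hK : 2 ≤ K) {Z : Type*} [Fintype Z]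
    (Q : Finset (Fin K) → Z → ℝ) (hQ : ∀ U, IsDist (Q U))
    (hQpos : ∀ z, 0 < Q ∅ z)
    (hAC : ∀ U : Finset (Fin K), U.Nonempty → AbsCont (Q U) (Q ∅))
    (ρ : Fin K → ℝ) (hρ : ∀ k, ρ k ∈ Set.Icc (0 : ℝ) 1) (hρ1 : ∑ k, ρ k = 1)
    (α : ℕ → ℝ) (hα : ∀ n, α n ∈ Set.Ioo (0 : ℝ) 1)
    (hα0 : Tendsto α atTop (𝓝 0))
    (hnα : Tendsto (fun n : ℕ => (n : ℝ) * α n) atTop atTop)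
    (ξ₂ : ℝ) (hξ₂ : 0 < ξ₂)
    (P : ∀ n : ℕ, (Fin n → Z) → ℝ) (hP : ∀ n, IsDist (P n))
    (hPD : ∀ n : ℕ, klDiv (P n) (fun z : Fin n → Z => ∏ j, Qmix Q ρ (α n) (z j)) ≤
      Real.exp (-(ξ₂ * n * α n))) :
    ∃ ξ₃ > 0, ∃ N : ℕ, ∀ n ≥ N,
      |klDiv (P n) (fun z : Fin n → Z => ∏ j, Q ∅ (z j)) -
          klDiv (fun z : Fin n → Z => ∏ j, Qmix Q ρ (α n) (z j))
            (fun z : Fin n → Z => ∏ j, Q ∅ (z j))| ≤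
        Real.exp (-(ξ₃ * n * α n)) :=
  klDiv_identification_general K Q hQ hQpos ρ hρ hρ1 α hα hα0 hnα ξ₂ hξ₂ P hP hPD
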